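/- Let F be a field, let n > 3, and let a : Fin n → Fˣ. For c ∈ F define m(c) = #{i : (a i : F) = c} + #{i : ((a i)⁻¹ : F) = c}. Then the following are equivalent: (i) for all i ≠ j one has a i ≠ a j and (a i)·(a j) ≠ 1; (ii) m(1) ≤ 2, m(−1) ≤ 2, and m(c) ≤ 1 for every c ∈ F with c ≠ 1 and c ≠ −1. -/
import Mathlib


open scoped Classical in
/-- **Lemma 2.11(3), case `G = D_n` (first part).** Let `n > 3`. A semisimple element with
eigenvalues `a 1, …, a n, (a 1)⁻¹, …, (a n)⁻¹` on the natural `2n`-dimensional module of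
`D_n` (eigenvalue multiplicities given by `m`) is regular (condition (i)) if and only if
the eigenvalues `1` and `-1` each have multiplicity at most `2` and all other eigenvalues
have multiplicity `1` (condition (ii)). -/
theorem regular_iff_mult_Dn
    {F : Type*} [Field F] {n : ℕ} (hn : 3 < n)
    (a : Fin n → Fˣ)
    (m : F → ℕ)
    (hm : ∀ c : F, m c =
      (Finset.univ.filter (fun i => (a i : F) = c)).card +
      (Finset.univ.filter (fun i => (((a i)⁻¹ : Fˣ) : F) = c)).card) :
    (∀ i j, i ≠ j → a i ≠ a j ∧ a i * a j ≠ 1) ↔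
      (m 1 ≤ 2 ∧ m (-1) ≤ 2 ∧ ∀ c : F, c ≠ 1 → c ≠ -1 → m c ≤ 1) := by
  have key1 : ∀ c : F, (∀ i j, i ≠ j → a i ≠ a j) →
      (Finset.univ.filter (fun i => (a i : F) = c)).card ≤ 1 := by
    intro c hd
    refine Finset.card_le_one.mpr fun i hi j hj => ?_
    simp only [Finset.mem_filter] at hi hj
    by_contra hij
    exact hd i j hij (Units.ext (hi.2.trans hj.2.symm))
  have key2 : ∀ c : F, (∀ i j, i ≠ j → a i ≠ a j) →
      (Finset.univ.filter (fun i => (((a i)⁻¹ : Fˣ) : F) = c)).card ≤ 1 := by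
    intro c hd
    refine Finset.card_le_one.mpr fun i hi j hj => ?_
    simp only [Finset.mem_filter] at hi hj
    by_contra hij
    exact hd i j hij (inv_injective (Units.ext (hi.2.trans hj.2.symm)))
  constructor
  · intro h
    have hd : ∀ i j, i ≠ j → a i ≠ a j := fun i j hij => (h i j hij).1
    refine ⟨?_, ?_, ?_⟩
    · rw [hm]; have := key1 1 hd; have := key2 1 hd; omega
    · rw [hm]; have := key1 (-1) hd; have := key2 (-1) hd; omega
    · intro c hc1 hc2
      rw [hm]
      have h1 := key1 c hd
      have h2 := key2 c hd
      have hz : (Finset.univ.filter (fun i => (a i : F) = c)).card = 0 ∨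
          (Finset.univ.filter (fun i => (((a i)⁻¹ : Fˣ) : F) = c)).card = 0 := by
        by_contra hcon
        push_neg at hcon
        obtain ⟨hc1', hc2'⟩ := hcon
        obtain ⟨i, hi⟩ := Finset.card_pos.mp (Nat.pos_of_ne_zero hc1')
        obtain ⟨j, hj⟩ := Finset.card_pos.mp (Nat.pos_of_ne_zero hc2')
        simp only [Finset.mem_filter] at hi hj
        have hji : a i = (a j)⁻¹ := Units.ext (hi.2.trans hj.2.symm)
        rcases eq_or_ne i j with rfl | hij
        · have hcc : c * c = 1 := by
            have hv : (a i : F) * (((a i)⁻¹ : Fˣ) : F) = 1 := by exact_mod_cast (a i).mul_inv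
            rw [hi.2, hj.2] at hv
            exact hv
          rcases mul_self_eq_one_iff.mp hcc with h' | h'
          · exact hc1 h'
          · exact hc2 h'
        · exact (h i j hij).2 (by rw [hji, inv_mul_cancel])
      omega
  · rintro ⟨h1, h2, h3⟩ i j hij
    have hmain : ∀ c : F, (a i : F) = c → (((a j)⁻¹ : Fˣ) : F) = c → False := by
      intro c hci hcj
      have hcard1 : 0 < (Finset.univ.filter (fun k => (a k : F) = c)).card :=
        Finset.card_pos.mpr ⟨i, Finset.mem_filter.mpr ⟨Finset.mem_univ _, hci⟩⟩
      have hcard2 : 0 < (Finset.univ.filter (fun k => (((a k)⁻¹ : Fˣ) : F) = c)).card :=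
        Finset.card_pos.mpr ⟨j, Finset.mem_filter.mpr ⟨Finset.mem_univ _, hcj⟩⟩
      rcases eq_or_ne c 1 with rfl | hc1
      · have hai : a i = 1 := Units.ext (by simpa using hci)
        have haj : a j = 1 := by
          have h' : (a j)⁻¹ = 1 := Units.ext (by simpa using hcj)
          simpa using inv_eq_one.mp h'
        have hb1 : 2 ≤ (Finset.univ.filter (fun k => (a k : F) = 1)).card :=
          Finset.one_lt_card.mpr ⟨i, Finset.mem_filter.mpr ⟨Finset.mem_univ _, by simp [hai]⟩,
            j, Finset.mem_filter.mpr ⟨Finset.mem_univ _, by simp [haj]⟩, hij⟩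
        have hb2 : 2 ≤ (Finset.univ.filter (fun k => (((a k)⁻¹ : Fˣ) : F) = 1)).card :=
          Finset.one_lt_card.mpr ⟨i, Finset.mem_filter.mpr ⟨Finset.mem_univ _, by simp [hai]⟩,
            j, Finset.mem_filter.mpr ⟨Finset.mem_univ _, by simp [haj]⟩, hij⟩
        have := hm (1 : F)
        omega
      rcases eq_or_ne c (-1) with rfl | hc2
      · have hai : a i = -1 := Units.ext (by simpa using hci)
        have haj : a j = -1 := by
          have h' : (a j)⁻¹ = -1 := Units.ext (by simpa using hcj)
          have h'' := congrArg (·⁻¹) h'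
          simpa using h''
        have hb1 : 2 ≤ (Finset.univ.filter (fun k => (a k : F) = -1)).card :=
          Finset.one_lt_card.mpr ⟨i, Finset.mem_filter.mpr ⟨Finset.mem_univ _, by simp [hai]⟩,
            j, Finset.mem_filter.mpr ⟨Finset.mem_univ _, by simp [haj]⟩, hij⟩
        have hb2 : 2 ≤ (Finset.univ.filter (fun k => (((a k)⁻¹ : Fˣ) : F) = -1)).card :=
          Finset.one_lt_card.mpr ⟨i, Finset.mem_filter.mpr ⟨Finset.mem_univ _, by simp [hai]⟩,
            j, Finset.mem_filter.mpr ⟨Finset.mem_univ _, by simp [haj]⟩, hij⟩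
        have := hm (-1 : F)
        omega
      · have := hm c
        have := h3 c hc1 hc2
        omega
    constructor
    · intro heq
      rcases eq_or_ne ((a i : F)) 1 with h' | hne1
      · have haj : a j = 1 := Units.ext (by rw [← heq]; simpa using h')
        exact hmain 1 h' (by simp [haj])
      rcases eq_or_ne ((a i : F)) (-1) with h' | hne2
      · have haj : a j = -1 := Units.ext (by rw [← heq]; simpa using h')
        exact hmain (-1) h' (by simp [haj])
      · have hb1 : 2 ≤ (Finset.univ.filter (fun k => (a k : F) = (a i : F))).card :=
          Finset.one_lt_card.mpr ⟨i, Finset.mem_filter.mpr ⟨Finset.mem_univ _, rfl⟩,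
            j, Finset.mem_filter.mpr ⟨Finset.mem_univ _, by rw [heq]⟩, hij⟩
        have := hm ((a i : F))
        have := h3 _ hne1 hne2
        omega
    · intro hprod
      have hji : a i = (a j)⁻¹ := eq_inv_of_mul_eq_one_left hprod
      exact hmain (a i : F) rfl (by rw [← hji])
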